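/- arXiv:2103.15528 — 5 statements merged into one kernel-verified Lean document; each statement's English description precedes it below -/
import Mathlib

section
/- For Re(z) > 0 and q > 0 real, the partial derivative with respect to q of the alternating Hurwitz zeta function satisfies ∂/∂q ζ_E(z,q) = -z · ζ_E(z+1, q). -/
/-!
For `Re z > 0` the partial sums of `ζ_E(z, t)` converge by Dirichlet's test: the coefficients
`(n + t)^(-z)` tend to zero and, by the mean value theorem, have summable variation
`O((n + t)^(-Re z - 1))`. Their termwise derivatives `-z (-1)^n (n + t)^(-z-1)` are dominated by a
convergent `p`-series uniformly in `t > q / 2`, so the limit may be differentiated termwise.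
-/

/-- The alternating Hurwitz zeta function, defined as the limit of the partial sums
`∑_{n=0}^{N-1} (-1)^n / (n+q)^z`. -/
noncomputable def zetaE (z q : ℂ) : ℂ :=
  Filter.limUnder Filter.atTop
    (fun N : ℕ => ∑ n ∈ Finset.range N, (-1 : ℂ) ^ n / ((n : ℂ) + q) ^ z)

open Filter Finset Complex Topology

theorem summable_nat_add_rpow_neg {c s : ℝ} (hc : 0 < c) (hs : 1 < s) :
    Summable fun n : ℕ => ((n : ℝ) + c) ^ (-s) := by
  refine ((Real.summable_one_div_nat_add_rpow c s).2 hs).congr fun n => ?_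
  rw [abs_of_pos (by positivity), Real.rpow_neg (by positivity), one_div]

/-- **Dirichlet's test** for coefficients of bounded variation. -/
theorem cauchySeq_series_smul_of_summable_norm_sub_of_bounded {𝕜 E : Type*} [NormedField 𝕜]
    [NormedAddCommGroup E] [NormedSpace 𝕜 E] {b : ℝ} {f : ℕ → 𝕜} {g : ℕ → E}
    (hf0 : Tendsto f atTop (𝓝 0)) (hfv : Summable fun n => ‖f (n + 1) - f n‖)
    (hgb : ∀ n, ‖∑ i ∈ range n, g i‖ ≤ b) :
    CauchySeq fun n => ∑ i ∈ range n, f i • g i := by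
  rw [← cauchySeq_shift 1]
  simp_rw [sum_range_by_parts _ _ (_ + 1), Nat.add_sub_cancel]
  have hboundary : CauchySeq fun n => f n • ∑ i ∈ range (n + 1), g i :=
    (NormedField.tendsto_zero_smul_of_tendsto_zero_of_bounded hf0
      ⟨b, eventually_map.mpr <| Eventually.of_forall fun n => hgb (n + 1)⟩).cauchySeq
  have hbulk :
      CauchySeq fun n => ∑ i ∈ range n, (f (i + 1) - f i) • ∑ j ∈ range (i + 1), g j :=
    cauchySeq_range_of_norm_bounded (hfv.mul_left b).hasSum.tendsto_sum_nat.cauchySeq fun n => by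
      rw [norm_smul, mul_comm]
      exact mul_le_mul_of_nonneg_right (hgb _) (norm_nonneg _)
  convert hboundary.add hbulk.neg using 1
  exact funext fun n => sub_eq_add_neg _ _

theorem norm_sum_range_neg_one_pow_le {R : Type*} [NormedRing R] [NormOneClass R] (n : ℕ) :
    ‖∑ i ∈ range n, (-1 : R) ^ i‖ ≤ 1 := by
  rw [neg_one_geom_sum]
  split_ifs <;> simp

theorem hasDerivAt_ofReal_cpow_of_pos {x : ℝ} (hx : 0 < x) (w : ℂ) :
    HasDerivAt (fun y : ℝ => (y : ℂ) ^ w) (w * (x : ℂ) ^ (w - 1)) x := by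
  simpa using ((hasDerivAt_id (x : ℂ)).cpow_const (ofReal_mem_slitPlane.2 hx)).comp_ofReal

theorem norm_ofReal_cpow_sub_le {x y : ℝ} (hx : 0 < x) (hxy : x ≤ y) {w : ℂ}
    (hw : w.re ≤ 1) :
    ‖(y : ℂ) ^ w - (x : ℂ) ^ w‖ ≤ ‖w‖ * x ^ (w.re - 1) * (y - x) := by
  rw [← Real.norm_of_nonneg (sub_nonneg.2 hxy)]
  refine (convex_Icc x y).norm_image_sub_le_of_norm_hasDerivWithin_le
    (fun u hu => (hasDerivAt_ofReal_cpow_of_pos (hx.trans_le hu.1) w).hasDerivWithinAt)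
    (fun u hu => ?_) (Set.left_mem_Icc.2 hxy) (Set.right_mem_Icc.2 hxy)
  rw [norm_mul, norm_cpow_eq_rpow_re_of_pos (hx.trans_le hu.1), sub_re, one_re]
  exact mul_le_mul_of_nonneg_left (Real.rpow_le_rpow_of_nonpos hx hu.1 (by linarith))
    (norm_nonneg w)

theorem norm_neg_one_pow_div_cpow {t : ℝ} (ht : 0 < t) (n : ℕ) (w : ℂ) :
    ‖(-1 : ℂ) ^ n / ((n : ℂ) + t) ^ w‖ = ((n : ℝ) + t) ^ (-w.re) := by
  rw [norm_div, norm_pow, norm_neg, norm_one, one_pow, ← ofReal_natCast, ← ofReal_add,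
    norm_cpow_eq_rpow_re_of_pos (by positivity), Real.rpow_neg (by positivity), one_div]

theorem hasDerivAt_neg_one_pow_div_cpow {t : ℝ} (ht : 0 < t) (n : ℕ) (w : ℂ) :
    HasDerivAt (fun u : ℝ => (-1 : ℂ) ^ n / ((n : ℂ) + u) ^ w)
      (-w * ((-1 : ℂ) ^ n / ((n : ℂ) + t) ^ (w + 1))) t := by
  have h := ((hasDerivAt_ofReal_cpow_of_pos (by positivity : 0 < (n : ℝ) + t) (-w)).comp_const_add
    (n : ℝ) t).const_mul ((-1 : ℂ) ^ n)
  have hfun : (fun u : ℝ => (-1 : ℂ) ^ n / ((n : ℂ) + u) ^ w) =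
      fun u => (-1 : ℂ) ^ n * (((n : ℝ) + u : ℝ) : ℂ) ^ (-w) := by
    funext u
    push_cast
    rw [cpow_neg, div_eq_mul_inv]
  rw [hfun]
  refine h.congr_deriv ?_
  push_cast
  rw [show -w - 1 = -(w + 1) by ring, cpow_neg]
  ring

theorem tendsto_zetaE {w : ℂ} (hw : 0 < w.re) {t : ℝ} (ht : 0 < t) :
    Tendsto (fun N : ℕ => ∑ n ∈ range N, (-1 : ℂ) ^ n / ((n : ℂ) + t) ^ w) atTop
      (𝓝 (zetaE w t)) := by
  set f : ℕ → ℂ := fun n => (((n : ℝ) + t : ℝ) : ℂ) ^ (-w)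
  have hf0 : Tendsto f atTop (𝓝 0) := by
    have hnorm : ∀ n, ‖f n‖ = ((n : ℝ) + t) ^ (-w.re) := fun n => by
      rw [norm_cpow_eq_rpow_re_of_pos (by positivity), neg_re]
    rw [tendsto_zero_iff_norm_tendsto_zero]
    simp_rw [hnorm]
    exact (tendsto_rpow_neg_atTop hw).comp
      (tendsto_atTop_add_const_right _ t tendsto_natCast_atTop_atTop)
  have hfv : Summable fun n => ‖f (n + 1) - f n‖ := by
    refine .of_nonneg_of_le (fun _ => norm_nonneg _) (fun n => ?_)
      ((summable_nat_add_rpow_neg ht (by linarith : 1 < w.re + 1)).mul_left ‖w‖)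
    have h := norm_ofReal_cpow_sub_le (by positivity : 0 < (n : ℝ) + t)
      (by linarith : (n : ℝ) + t ≤ (n : ℝ) + 1 + t) (w := -w) (by rw [neg_re]; linarith)
    simp only [f, Nat.cast_add, Nat.cast_one]
    convert h using 1
    rw [norm_neg, neg_re]
    ring_nf
  obtain ⟨L, hL⟩ := cauchySeq_tendsto_of_complete
    (cauchySeq_series_smul_of_summable_norm_sub_of_bounded hf0 hfv
      (norm_sum_range_neg_one_pow_le (R := ℂ)))
  have hterm : ∀ n : ℕ, (-1 : ℂ) ^ n / ((n : ℂ) + t) ^ w = f n • (-1 : ℂ) ^ n := by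
    intro n
    simp only [f, smul_eq_mul]
    push_cast
    rw [cpow_neg, div_eq_inv_mul]
  have hsum : (fun N : ℕ => ∑ n ∈ range N, (-1 : ℂ) ^ n / ((n : ℂ) + t) ^ w) =
      fun N => ∑ n ∈ range N, f n • (-1 : ℂ) ^ n :=
    funext fun N => sum_congr rfl fun n _ => hterm n
  rwa [zetaE, hsum, hL.limUnder_eq]

theorem summable_neg_one_pow_div_cpow {w : ℂ} (hw : 1 < w.re) {t : ℝ} (ht : 0 < t) :
    Summable fun n : ℕ => (-1 : ℂ) ^ n / ((n : ℂ) + t) ^ w :=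
  .of_norm_bounded (summable_nat_add_rpow_neg ht hw) fun n =>
    (norm_neg_one_pow_div_cpow ht n w).le

theorem zetaE_eq_tsum {w : ℂ} (hw : 1 < w.re) {t : ℝ} (ht : 0 < t) :
    zetaE w t = ∑' n : ℕ, (-1 : ℂ) ^ n / ((n : ℂ) + t) ^ w :=
  (summable_neg_one_pow_div_cpow hw ht).hasSum.tendsto_sum_nat.limUnder_eq

theorem tendstoUniformlyOn_zetaE {w : ℂ} (hw : 1 < w.re) {c : ℝ} (hc : 0 < c) :
    TendstoUniformlyOn (fun N (t : ℝ) => ∑ n ∈ range N, (-1 : ℂ) ^ n / ((n : ℂ) + t) ^ w)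
      (fun t : ℝ => zetaE w t) atTop (Set.Ioi c) := by
  refine (tendstoUniformlyOn_tsum_nat (summable_nat_add_rpow_neg hc hw)
    fun n t ht => ?_).congr_right fun t ht => (zetaE_eq_tsum hw (hc.trans ht)).symm
  rw [norm_neg_one_pow_div_cpow (hc.trans ht)]
  exact Real.rpow_le_rpow_of_nonpos (by positivity) (by linarith [ht.out]) (by linarith)

theorem zetaE_hasDerivAt_q (z : ℂ) (q : ℝ) (hz : 0 < z.re) (hq : 0 < q) :
    HasDerivAt (fun t : ℝ => zetaE z (t : ℂ)) (-z * zetaE (z + 1) (q : ℂ)) q := by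
  have hderiv : ∀ N : ℕ, ∀ t ∈ Set.Ioi (q / 2),
      HasDerivAt (fun u : ℝ => ∑ n ∈ range N, (-1 : ℂ) ^ n / ((n : ℂ) + u) ^ z)
        (-z * ∑ n ∈ range N, (-1 : ℂ) ^ n / ((n : ℂ) + t) ^ (z + 1)) t := fun N t ht => by
    rw [mul_sum]
    exact HasDerivAt.fun_sum fun n _ =>
      hasDerivAt_neg_one_pow_div_cpow ((half_pos hq).trans ht) n z
  exact hasDerivAt_of_tendstoUniformlyOn isOpen_Ioi
    ((uniformContinuous_mul_left' (-z)).comp_tendstoUniformlyOn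
      (tendstoUniformlyOn_zetaE (by rw [add_re, one_re]; linarith) (half_pos hq)))
    (.of_forall hderiv) (fun t ht => tendsto_zetaE hz ((half_pos hq).trans ht))
    (half_lt_self hq)
end

section
/- (Boole summation formula) Let α < β be integers, N a positive integer, and f a function on [α, β] with absolutely integrable (N+1)-th derivative. Then 2 Σ_{n=α}^{β-1} (-1)^n f(n) = Σ_{k=0}^{N} (E_k(0)/k!) ((-1)^{β-1} f^{(k)}(β) + (-1)^α f^{(k)}(α)) + (1/N!) ∫_α^β Ē_N(-t) f^{(N+1)}(t) dt. -/
/-- The `n`-th Euler polynomial, defined via the recurrence coming from the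
generating function `2 e^{xt}/(e^t + 1) = ∑ E_n(x) t^n/n!`. -/
noncomputable def eulerPoly : ℕ → ℝ → ℝ
  | n => fun x => x ^ n - (1/2) *
      ∑ k ∈ (Finset.range n).attach, (n.choose k.1 : ℝ) * eulerPoly k.1 x
  termination_by n => n
  decreasing_by exact Finset.mem_range.mp k.2

/-- The quasi-periodic Euler function: `Ē_n(x) = E_n(x)` on `[0,1)`, extended by
`Ē_n(x+1) = -Ē_n(x)`. -/
noncomputable def eulerBar (n : ℕ) (x : ℝ) : ℝ :=
  (-1 : ℝ) ^ ⌊x⌋ * eulerPoly n (Int.fract x)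

/-!
On a unit interval `[a, a + 1]`, integrating by parts against `E_k(a + 1 - t)` and using
`E_k' = k E_{k-1}` and `E_k(1) = -E_k(0)` for `k ≥ 1` (both from the recurrence, the latter via
`E_k(x + 1) + E_k(x) = 2 x^k`) gives
`2 f(a) = ∑_{k ≤ N} E_k(0)/k! (f^{(k)}(a + 1) + f^{(k)}(a))`
`          - (1/N!) ∫_a^{a+1} E_N(a + 1 - t) f^{(N+1)}(t) dt`.
For `t ∈ (n, n + 1]` one has `Ē_N(-t) = (-1)^{n+1} E_N(n + 1 - t)`, so after multiplying the
identity at `a = n` by `(-1)^n` the boundary terms telescope over `α ≤ n < β` and the integrals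
add up to one over `[α, β]`.
-/

open Finset

lemma eulerPoly_eq (n : ℕ) (x : ℝ) :
    eulerPoly n x = x ^ n - 1 / 2 * ∑ k ∈ range n, (n.choose k : ℝ) * eulerPoly k x := by
  rw [eulerPoly, ← sum_attach (range n)]

@[simp]
lemma eulerPoly_zero (x : ℝ) : eulerPoly 0 x = 1 := by
  rw [eulerPoly_eq]
  simp

lemma eulerPoly_add_one_add_self (n : ℕ) (x : ℝ) :
    eulerPoly n (x + 1) + eulerPoly n x = 2 * x ^ n := by
  induction n using Nat.strong_induction_on with
  | _ n ih =>
  have hsum : ∑ k ∈ range n, (n.choose k : ℝ) * eulerPoly k (x + 1) +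
      ∑ k ∈ range n, (n.choose k : ℝ) * eulerPoly k x = 2 * ((x + 1) ^ n - x ^ n) := by
    rw [← sum_add_distrib, add_pow, sum_range_succ, Nat.choose_self, Nat.cast_one, one_pow,
      mul_one, mul_one, add_sub_cancel_right, mul_sum]
    refine sum_congr rfl fun k hk => ?_
    rw [← mul_add, ih k (mem_range.1 hk)]
    ring
  rw [eulerPoly_eq n (x + 1), eulerPoly_eq n x]
  linarith

lemma eulerPoly_one {n : ℕ} (hn : n ≠ 0) : eulerPoly n 1 = -eulerPoly n 0 := by
  have h := eulerPoly_add_one_add_self n 0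
  rw [zero_add, zero_pow hn] at h
  linarith

lemma hasDerivAt_eulerPoly (n : ℕ) (x : ℝ) :
    HasDerivAt (eulerPoly n) (n * eulerPoly (n - 1) x) x := by
  induction n using Nat.strong_induction_on generalizing x with
  | _ n ih =>
  have hsum : HasDerivAt (fun y => ∑ k ∈ range n, (n.choose k : ℝ) * eulerPoly k y)
      (∑ k ∈ range n, (n.choose k : ℝ) * (k * eulerPoly (k - 1) x)) x :=
    HasDerivAt.fun_sum fun k hk => (ih k (mem_range.1 hk) x).const_mul _
  rw [show eulerPoly n = _ from funext (eulerPoly_eq n)]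
  refine ((hasDerivAt_pow n x).sub (hsum.const_mul (1 / 2))).congr_deriv ?_
  rcases n with _ | m
  · simp
  have hchoose : ∑ k ∈ range (m + 1), ((m + 1).choose k : ℝ) * (k * eulerPoly (k - 1) x) =
      (m + 1) * ∑ j ∈ range m, (m.choose j : ℝ) * eulerPoly j x := by
    rw [sum_range_succ', mul_sum]
    refine (add_eq_left.2 (by simp)).trans (sum_congr rfl fun j _ => ?_)
    have h := congrArg (Nat.cast (R := ℝ)) (Nat.add_one_mul_choose_eq m j)
    push_cast at h ⊢
    linear_combination -eulerPoly j x * h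
  rw [hchoose, Nat.add_sub_cancel, eulerPoly_eq m x]
  push_cast
  ring

@[fun_prop]
lemma continuous_eulerPoly (n : ℕ) : Continuous (eulerPoly n) :=
  continuous_iff_continuousAt.2 fun x => (hasDerivAt_eulerPoly n x).continuousAt

lemma eulerBar_neg_of_mem_Ioc (N : ℕ) {n : ℤ} {t : ℝ} (ht : t ∈ Set.Ioc (n : ℝ) (n + 1)) :
    eulerBar N (-t) = (-1) ^ (n + 1) * eulerPoly N (n + 1 - t) := by
  have hfloor : ⌊-t⌋ = -(n + 1) := by
    rw [Int.floor_eq_iff]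
    push_cast
    constructor <;> linarith [ht.1, ht.2]
  rw [eulerBar, Int.fract, hfloor, ← inv_zpow', inv_neg_one]
  push_cast
  ring_nf

lemma integral_eulerBar_neg_mul (N : ℕ) (g : ℝ → ℝ) (n : ℤ) :
    ∫ t in (n : ℝ)..n + 1, eulerBar N (-t) * g t =
      (-1) ^ (n + 1) * ∫ t in (n : ℝ)..n + 1, eulerPoly N (n + 1 - t) * g t := by
  rw [← intervalIntegral.integral_const_mul]
  refine intervalIntegral.integral_congr_ae (Filter.Eventually.of_forall fun t ht => ?_)
  rw [Set.uIoc_of_le (by linarith)] at ht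
  rw [eulerBar_neg_of_mem_Ioc N ht, mul_assoc]

lemma intervalIntegrable_eulerBar_neg_mul (N : ℕ) {g : ℝ → ℝ} (hg : Continuous g) (n : ℤ) :
    IntervalIntegrable (fun t => eulerBar N (-t) * g t) MeasureTheory.volume n (n + 1) := by
  have hcont : Continuous fun t : ℝ => (-1) ^ (n + 1) * eulerPoly N (n + 1 - t) * g t := by
    fun_prop
  refine (hcont.intervalIntegrable _ _).congr fun t ht => ?_
  rw [Set.uIoc_of_le (by linarith)] at ht
  rw [eulerBar_neg_of_mem_Ioc N ht]

lemma hasDerivAt_iteratedDeriv {𝕜 F : Type*} [NontriviallyNormedField 𝕜] [NormedAddCommGroup F]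
    [NormedSpace 𝕜 F] {n k : ℕ} {f : 𝕜 → F} (hf : ContDiff 𝕜 n f) (hk : k < n) (x : 𝕜) :
    HasDerivAt (iteratedDeriv k f) (iteratedDeriv (k + 1) f x) x := by
  rw [iteratedDeriv_succ]
  exact (hf.differentiable_iteratedDeriv k (by exact_mod_cast hk) x).hasDerivAt

section UnitInterval

variable {f : ℝ → ℝ} {M : ℕ}

lemma integral_eulerPoly_succ_mul_iteratedDeriv (hf : ContDiff ℝ (M + 2 : ℕ) f) (a : ℝ) :
    ∫ t in a..a + 1, eulerPoly (M + 1) (a + 1 - t) * iteratedDeriv (M + 2) f t =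
      eulerPoly (M + 1) 0 * (iteratedDeriv (M + 1) f (a + 1) + iteratedDeriv (M + 1) f a) +
        (M + 1) * ∫ t in a..a + 1, eulerPoly M (a + 1 - t) * iteratedDeriv (M + 1) f t := by
  have hu : ∀ t ∈ Set.uIcc a (a + 1), HasDerivAt (fun s => eulerPoly (M + 1) (a + 1 - s))
      (-((M + 1) * eulerPoly M (a + 1 - t))) t := fun t _ => by
    simpa using (hasDerivAt_eulerPoly (M + 1) (a + 1 - t)).comp_const_sub (a + 1) t
  have hv : ∀ t ∈ Set.uIcc a (a + 1),
      HasDerivAt (iteratedDeriv (M + 1) f) (iteratedDeriv (M + 2) f t) t :=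
    fun t _ => hasDerivAt_iteratedDeriv hf (by omega) t
  have hcont : Continuous (iteratedDeriv (M + 2) f) :=
    hf.continuous_iteratedDeriv _ le_rfl
  rw [intervalIntegral.integral_mul_deriv_eq_deriv_mul hu hv
    (Continuous.intervalIntegrable (by fun_prop) _ _) (hcont.intervalIntegrable _ _)]
  simp only [sub_self, add_sub_cancel_left, eulerPoly_one (Nat.succ_ne_zero M), neg_mul,
    intervalIntegral.integral_neg, intervalIntegral.integral_const_mul, mul_assoc]
  ring

lemma two_mul_eq_sum_eulerPoly_sub_integral (hf : ContDiff ℝ (M + 1 : ℕ) f) (a : ℝ) :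
    2 * f a = ∑ k ∈ range (M + 1), eulerPoly k 0 / k.factorial *
        (iteratedDeriv k f (a + 1) + iteratedDeriv k f a) -
      1 / M.factorial * ∫ t in a..a + 1, eulerPoly M (a + 1 - t) * iteratedDeriv (M + 1) f t := by
  induction M with
  | zero =>
    have hderiv : ∀ t ∈ Set.uIcc a (a + 1), HasDerivAt f (iteratedDeriv 1 f t) t :=
      fun t _ => by simpa using hasDerivAt_iteratedDeriv hf zero_lt_one t
    have hcont : Continuous (iteratedDeriv 1 f) := hf.continuous_iteratedDeriv _ le_rfl
    simp only [zero_add, range_one, sum_singleton, eulerPoly_zero, Nat.factorial_zero,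
      Nat.cast_one, div_one, one_mul, iteratedDeriv_zero,
      intervalIntegral.integral_eq_sub_of_hasDerivAt hderiv (hcont.intervalIntegrable _ _)]
    ring
  | succ M ih =>
    rw [sum_range_succ, ih (hf.of_le (by norm_cast; omega)),
      integral_eulerPoly_succ_mul_iteratedDeriv hf, Nat.factorial_succ]
    push_cast
    field_simp
    ring

end UnitInterval

lemma sum_Ico_add_natCast {M : Type*} [AddCommMonoid M] (g : ℤ → M) (α : ℤ) (m : ℕ) :
    ∑ n ∈ Ico α (α + m), g n = ∑ k ∈ range m, g (α + k) := by
  rw [Int.Ico_eq_finset_map, sum_map]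
  simp

lemma sum_Ico_sub_add_one {M : Type*} [AddCommGroup M] (g : ℤ → M) {α β : ℤ} (h : α ≤ β) :
    ∑ n ∈ Ico α β, (g n - g (n + 1)) = g α - g β := by
  obtain ⟨m, rfl⟩ := Int.le.dest h
  rw [sum_Ico_add_natCast]
  simpa [add_assoc] using sum_range_sub' (fun k : ℕ => g (α + k)) m

lemma sum_integral_Ico_intCast {E : Type*} [NormedAddCommGroup E] [NormedSpace ℝ E] {G : ℝ → E}
    (hG : ∀ n : ℤ, IntervalIntegrable G MeasureTheory.volume n (n + 1)) {α β : ℤ} (h : α ≤ β) :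
    ∑ n ∈ Ico α β, ∫ t in (n : ℝ)..n + 1, G t = ∫ t in (α : ℝ)..β, G t := by
  obtain ⟨m, rfl⟩ := Int.le.dest h
  rw [sum_Ico_add_natCast]
  have := intervalIntegral.sum_integral_adjacent_intervals (a := fun k : ℕ => ((α + k : ℤ) : ℝ))
    (n := m) fun k _ => by simpa [add_assoc] using hG (α + k)
  simpa [add_assoc] using this

noncomputable def booleBoundaryTerm (N : ℕ) (f : ℝ → ℝ) (n : ℤ) : ℝ :=
  (-1) ^ n * ∑ k ∈ range (N + 1), eulerPoly k 0 / k.factorial * iteratedDeriv k f n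

lemma two_mul_neg_one_zpow_mul_eq {N : ℕ} {f : ℝ → ℝ} (hf : ContDiff ℝ (N + 1 : ℕ) f) (n : ℤ) :
    2 * ((-1) ^ n * f n) = booleBoundaryTerm N f n - booleBoundaryTerm N f (n + 1) +
      1 / N.factorial * ∫ t in (n : ℝ)..n + 1, eulerBar N (-t) * iteratedDeriv (N + 1) f t := by
  have h := two_mul_eq_sum_eulerPoly_sub_integral hf n
  simp only [mul_add, sum_add_distrib] at h
  rw [booleBoundaryTerm, booleBoundaryTerm, integral_eulerBar_neg_mul,
    zpow_add_one₀ (by norm_num)]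
  push_cast
  linear_combination (-1 : ℝ) ^ n * h

theorem boole_summation_general (α β : ℤ) (hαβ : α < β) (N : ℕ) (f : ℝ → ℝ)
    (hf : ContDiff ℝ (N + 1 : ℕ) f) :
    2 * ∑ n ∈ Finset.Ico α β, (-1 : ℝ) ^ n * f n =
      ∑ k ∈ Finset.range (N + 1), (eulerPoly k 0 / k.factorial) *
        ((-1 : ℝ) ^ (β - 1) * iteratedDeriv k f β + (-1 : ℝ) ^ α * iteratedDeriv k f α) +
      (1 / N.factorial) * ∫ t in (α : ℝ)..(β : ℝ), eulerBar N (-t) * iteratedDeriv (N + 1) f t := by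
  have hboundary : ∑ k ∈ range (N + 1), eulerPoly k 0 / k.factorial *
      ((-1 : ℝ) ^ (β - 1) * iteratedDeriv k f β + (-1 : ℝ) ^ α * iteratedDeriv k f α) =
      booleBoundaryTerm N f α - booleBoundaryTerm N f β := by
    rw [booleBoundaryTerm, booleBoundaryTerm, mul_sum, mul_sum, ← sum_sub_distrib]
    refine sum_congr rfl fun k _ => ?_
    rw [zpow_sub_one₀ (by norm_num)]
    ring
  have hintegrable (n : ℤ) := intervalIntegrable_eulerBar_neg_mul N
    (hf.continuous_iteratedDeriv (N + 1) le_rfl) n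
  calc 2 * ∑ n ∈ Ico α β, (-1 : ℝ) ^ n * f n
      = ∑ n ∈ Ico α β, (booleBoundaryTerm N f n - booleBoundaryTerm N f (n + 1)) + 1 / N.factorial *
          ∑ n ∈ Ico α β, ∫ t in (n : ℝ)..n + 1, eulerBar N (-t) * iteratedDeriv (N + 1) f t := by
        rw [mul_sum, mul_sum, ← sum_add_distrib]
        exact sum_congr rfl fun n _ => two_mul_neg_one_zpow_mul_eq hf n
    _ = _ := by
        rw [sum_Ico_sub_add_one _ hαβ.le, sum_integral_Ico_intCast hintegrable hαβ.le, hboundary]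

theorem boole_summation (α β : ℤ) (hαβ : α < β) (N : ℕ) (hN : 1 ≤ N) (f : ℝ → ℝ)
    (hf : ContDiff ℝ (N + 1 : ℕ) f)
    (hint : IntervalIntegrable (iteratedDeriv (N + 1) f) MeasureTheory.volume α β) :
    2 * ∑ n ∈ Finset.Ico α β, (-1 : ℝ) ^ n * f n =
      ∑ k ∈ Finset.range (N + 1), (eulerPoly k 0 / k.factorial) *
        ((-1 : ℝ) ^ (β - 1) * iteratedDeriv k f β + (-1 : ℝ) ^ α * iteratedDeriv k f α) +
      (1 / N.factorial) * ∫ t in (α : ℝ)..(β : ℝ), eulerBar N (-t) * iteratedDeriv (N + 1) f t :=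
  boole_summation_general α β hαβ N f hf
end

section
/- For every natural number k ≥ 1 and every complex z, the derivative of the falling binomial satisfies d/dz [C(-z, k)] = Σ_{j=0}^{k-1} ((-1)^{k-j}/(k-j)) C(-z, j), where C(-z, k) = (-z)(-z-1)⋯(-z-k+1)/k!. -/
/-!
Write `C(x, k)` for the generalized binomial coefficient. Differentiating
`(k + 1) C(x, k + 1) = (x - k) C(x, k)` gives a recurrence for the derivatives, and the
expansion `C'(x, k) = ∑_{j<k} (-1)^(k-j+1) / (k-j) C(x, j)` (the coefficients of
`log (1 + t)`) satisfies the same recurrence, because `x C(x, j) = (j + 1) C(x, j + 1) + j C(x, j)`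
turns it into an alternating telescoping sum. The theorem is the chain rule applied to `x = -z`.
-/

open Finset

theorem sum_range_neg_one_pow_mul_add {R : Type*} [CommRing R] (f : ℕ → R) (k : ℕ) :
    ∑ j ∈ range k, (-1 : R) ^ (k - j) * (f (j + 1) + f j) = (-1) ^ k * f 0 - f k := by
  have h := sum_range_sub (fun j => -(-1 : R) ^ (k - j) * f j) k
  simp only [Nat.sub_self, pow_zero, Nat.sub_zero] at h
  rw [show (-1 : R) ^ k * f 0 - f k = -1 * f k - -(-1) ^ k * f 0 by ring, ← h]
  refine sum_congr rfl fun j hj => ?_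
  rw [show k - j = k - (j + 1) + 1 by have := mem_range.mp hj; omega, pow_succ]
  ring

section GenBinom

variable {𝕜 : Type*} [Field 𝕜]

noncomputable def genBinom (k : ℕ) (x : 𝕜) : 𝕜 :=
  (∏ i ∈ range k, (x - i)) / k.factorial

@[simp]
theorem genBinom_zero (x : 𝕜) : genBinom 0 x = 1 := by
  simp [genBinom]

theorem genBinom_succ (k : ℕ) (x : 𝕜) :
    genBinom (k + 1) x = genBinom k x * (x - k) / (k + 1) := by
  simp only [genBinom, prod_range_succ, Nat.factorial_succ, Nat.cast_mul, Nat.cast_succ]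
  rw [div_mul_eq_mul_div, div_div, mul_comm ((k : 𝕜) + 1)]

variable [CharZero 𝕜]

theorem mul_genBinom_eq (j : ℕ) (x : 𝕜) :
    x * genBinom j x = (j + 1) * genBinom (j + 1) x + j * genBinom j x := by
  rw [genBinom_succ, mul_div_cancel₀ _ (Nat.cast_add_one_ne_zero j)]
  ring

theorem sum_genBinom_recurrence (k : ℕ) (x : 𝕜) :
    (∑ j ∈ range k, (-1 : 𝕜) ^ (k - j + 1) / ((k : 𝕜) - j) * genBinom j x) * (x - k)
        + genBinom k x =
      (k + 1) * ∑ j ∈ range (k + 1),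
        (-1 : 𝕜) ^ (k + 1 - j + 1) / ((k + 1 : 𝕜) - j) * genBinom j x := by
  have hsub : ∀ j ∈ range k, (k : 𝕜) - j ≠ 0 := fun j hj =>
    sub_ne_zero.mpr (Nat.cast_injective.ne (mem_range.mp hj).ne')
  have hlhs : ∀ j ∈ range k,
      (-1 : 𝕜) ^ (k - j + 1) / ((k : 𝕜) - j) * genBinom j x * (x - k) =
        (-1 : 𝕜) ^ (k - j + 1) / ((k : 𝕜) - j) * (j + 1) * genBinom (j + 1) x
          + (-1) ^ (k - j) * genBinom j x := by
    intro j hj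
    rw [mul_assoc, mul_sub, mul_comm _ x, mul_genBinom_eq, pow_succ]
    field_simp [hsub j hj]
    ring
  have hrhs : ∀ j ∈ range k,
      (k + 1 : 𝕜) * ((-1 : 𝕜) ^ (k + 1 - (j + 1) + 1) / ((k + 1 : 𝕜) - (j + 1 : ℕ))
          * genBinom (j + 1) x) =
        (-1 : 𝕜) ^ (k - j + 1) / ((k : 𝕜) - j) * (j + 1) * genBinom (j + 1) x
          - (-1) ^ (k - j) * genBinom (j + 1) x := by
    intro j hj
    rw [Nat.add_sub_add_right, Nat.cast_succ, add_sub_add_right_eq_sub, pow_succ]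
    field_simp [hsub j hj]
    ring
  rw [mul_sum, sum_range_succ', sum_congr rfl hrhs, sum_mul, sum_congr rfl hlhs, sum_sub_distrib,
    sum_add_distrib]
  have htele := sum_range_neg_one_pow_mul_add (fun j => genBinom j x) k
  simp only [mul_add, sum_add_distrib, genBinom_zero] at htele
  simp only [Nat.sub_zero, Nat.cast_zero, sub_zero, genBinom_zero, pow_succ]
  field_simp
  linear_combination htele

end GenBinom

theorem hasDerivAt_genBinom {𝕜 : Type*} [NontriviallyNormedField 𝕜] [CharZero 𝕜]
    (k : ℕ) (x : 𝕜) :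
    HasDerivAt (genBinom k)
      (∑ j ∈ range k, (-1 : 𝕜) ^ (k - j + 1) / ((k : 𝕜) - j) * genBinom j x) x := by
  induction k with
  | zero =>
    simpa [funext (genBinom_zero (𝕜 := 𝕜))] using hasDerivAt_const x (1 : 𝕜)
  | succ k ih =>
    rw [funext (genBinom_succ k)]
    have h := (ih.mul ((hasDerivAt_id x).sub_const (k : 𝕜))).div_const ((k : 𝕜) + 1)
    refine h.congr_deriv ?_
    rw [div_eq_iff (Nat.cast_add_one_ne_zero k), id, mul_one, sum_genBinom_recurrence,
      Nat.cast_succ, mul_comm]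

theorem deriv_binom_neg_general (k : ℕ) (z : ℂ) :
    deriv (fun w : ℂ => (∏ i ∈ Finset.range k, (-w - (i : ℂ))) / (k.factorial : ℂ)) z =
      ∑ j ∈ Finset.range k, ((-1 : ℂ) ^ (k - j) / ((k : ℂ) - (j : ℂ))) *
        ((∏ i ∈ Finset.range j, (-z - (i : ℂ))) / (j.factorial : ℂ)) := by
  have h := (hasDerivAt_genBinom k (-z)).comp z (hasDerivAt_neg z)
  refine h.deriv.trans ?_
  rw [sum_mul]
  refine sum_congr rfl fun j _ => ?_
  simp only [genBinom, pow_succ]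
  ring

theorem deriv_binom_neg (k : ℕ) (hk : 1 ≤ k) (z : ℂ) :
    deriv (fun w : ℂ => (∏ i ∈ Finset.range k, (-w - (i : ℂ))) / (k.factorial : ℂ)) z =
      ∑ j ∈ Finset.range k, ((-1 : ℂ) ^ (k - j) / ((k : ℂ) - (j : ℂ))) *
        ((∏ i ∈ Finset.range j, (-z - (i : ℂ))) / (j.factorial : ℂ)) :=
  deriv_binom_neg_general k z
end

section
/- For every natural number k ≥ 1 and complex z, the derivative of the normalized Pochhammer symbol satisfies d/dz [(z)_k / k!] = Σ_{j=0}^{k-1} (z)_j / (j! (k-j)), where (z)_k = z(z+1)⋯(z+k-1). -/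
/-!
Write `R j = (z)_j / j!`. Then `R (k + 1) = R k * (z + k) / (k + 1)`, so by the product rule the
claim follows by induction on `k` from the identity
`(k + 1) * ∑_{j ≤ k} R j / (k + 1 - j) = (z + k) * ∑_{j < k} R j / (k - j) + R k`,
which only uses the recurrence `(z + j) * R j = (j + 1) * R (j + 1)`.
-/

open Finset

theorem prod_range_succ_add_div_factorial {K : Type*} [Field K] (k : ℕ) (z : K) :
    (∏ i ∈ range (k + 1), (z + i)) / ((k + 1).factorial : K) =
      (∏ i ∈ range k, (z + i)) / (k.factorial : K) * ((z + k) / (k + 1)) := by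
  rw [prod_range_succ, Nat.factorial_succ, Nat.cast_mul, div_mul_div_comm, Nat.cast_succ,
    mul_comm ((k : K) + 1)]

theorem mul_sum_range_succ_div_sub {K : Type*} [Field K] [CharZero K] (R : ℕ → K) (z : K)
    (hR : ∀ j : ℕ, (z + j) * R j = (j + 1) * R (j + 1)) (k : ℕ) :
    (k + 1 : K) * ∑ j ∈ range (k + 1), R j / (k + 1 - j) =
      (z + k) * ∑ j ∈ range k, R j / (k - j) + R k := by
  have hsub : ∀ j ∈ range k, (k - j : K) ≠ 0 := fun j hj =>
    sub_ne_zero.2 (Nat.cast_injective.ne (mem_range.1 hj).ne')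
  have hsub' : ∀ j ∈ range (k + 1), (k + 1 - j : K) ≠ 0 := fun j hj =>
    sub_ne_zero.2 (by exact_mod_cast (mem_range.1 hj).ne')
  calc (k + 1 : K) * ∑ j ∈ range (k + 1), R j / (k + 1 - j)
      = ∑ j ∈ range (k + 1), (j * R j / (k + 1 - j) + R j) := by
        rw [mul_sum]
        refine sum_congr rfl fun j hj => ?_
        field_simp [hsub' j hj]
        ring
    _ = ∑ j ∈ range k, (j + 1) * R (j + 1) / (k - j) + ∑ j ∈ range (k + 1), R j := by
        rw [sum_add_distrib, sum_range_succ']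
        simp only [Nat.cast_zero, zero_mul, zero_div, add_zero, Nat.cast_succ,
          add_sub_add_right_eq_sub]
    _ = ∑ j ∈ range k, ((z + j) * R j / (k - j) + R j) + R k := by
        simp only [sum_range_succ, sum_add_distrib, hR]
        ring
    -- split `z + k = (z + j) + (k - j)` in each term
    _ = (z + k) * ∑ j ∈ range k, R j / (k - j) + R k := by
        rw [mul_sum]
        congr 1
        refine sum_congr rfl fun j hj => ?_
        field_simp [hsub j hj]
        ring

theorem hasDerivAt_prod_range_add_div_factorial {𝕜 : Type*} [NontriviallyNormedField 𝕜]
    [CharZero 𝕜] (k : ℕ) (z : 𝕜) :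
    HasDerivAt (fun w : 𝕜 => (∏ i ∈ range k, (w + i)) / (k.factorial : 𝕜))
      (∑ j ∈ range k, (∏ i ∈ range j, (z + i)) / ((j.factorial : 𝕜) * (k - j))) z := by
  induction k with
  | zero => simpa using hasDerivAt_const z (1 : 𝕜)
  | succ k ih =>
    simp_rw [prod_range_succ_add_div_factorial]
    have hlin : HasDerivAt (fun w : 𝕜 => (w + k) / (k + 1)) (1 / (k + 1)) z :=
      ((hasDerivAt_id z).add_const _).div_const _
    refine (ih.mul hlin).congr_deriv ?_
    have hk : (k + 1 : 𝕜) ≠ 0 := Nat.cast_add_one_ne_zero k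
    have hsum := mul_sum_range_succ_div_sub
      (fun j => (∏ i ∈ range j, (z + i)) / (j.factorial : 𝕜)) z
      (fun j => by rw [prod_range_succ_add_div_factorial]; field_simp) k
    simp only [div_div] at hsum
    push_cast
    rw [← mul_right_inj' hk, hsum]
    field_simp

theorem deriv_pochhammer_div_factorial_general (k : ℕ) (z : ℂ) :
    deriv (fun w : ℂ => (∏ i ∈ Finset.range k, (w + (i : ℂ))) / (k.factorial : ℂ)) z =
      ∑ j ∈ Finset.range k,
        (∏ i ∈ Finset.range j, (z + (i : ℂ))) / ((j.factorial : ℂ) * ((k : ℂ) - (j : ℂ))) :=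
  (hasDerivAt_prod_range_add_div_factorial k z).deriv

theorem deriv_pochhammer_div_factorial (k : ℕ) (hk : 1 ≤ k) (z : ℂ) :
    deriv (fun w : ℂ => (∏ i ∈ Finset.range k, (w + (i : ℂ))) / (k.factorial : ℂ)) z =
      ∑ j ∈ Finset.range k,
        (∏ i ∈ Finset.range j, (z + (i : ℂ))) / ((j.factorial : ℂ) * ((k : ℂ) - (j : ℂ))) :=
  deriv_pochhammer_div_factorial_general k z
end

section
/- Let g(t) = -(q+t)^{-z} log(q+t) for fixed complex z and real q > 0. Then for every integer k ≥ 2, g^{(k)}(0) = (-1)^k k! Σ_{j=0}^{k-1} (z)_j/(j!(k-j)) · q^{-z-k} + (-1)^{k+1} (z)_k q^{-z-k} log q. -/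
/-!
On `x > 0` the `k`-th derivative of `-x^(-z) log x` has the shape
`(-1)^k x^(-z-k) (c_k - (z)_k log x)`: differentiating once more turns `(c_k, (z)_k)` into
`((z+k) c_k + (z)_k, (z+k) (z)_k)`. The closed form `c_k = k! ∑_{j<k} (z)_j / (j! (k-j))` obeys
this recursion because `u_j = (z)_j / j!` satisfies `(j+1) u_{j+1} = (z+j) u_j`, which turns
`(k+1) ∑_{j≤k} u_j/(k+1-j) - (z+k) ∑_{j<k} u_j/(k-j)` into a telescoping sum.
Translation invariance of iterated derivatives then moves the point from `q` to `0`.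
-/

open Finset
open scoped Nat

theorem sum_range_succ_div_sub {K : Type*} [Field K] [CharZero K] (u : ℕ → K) (w : K)
    (hu : ∀ j : ℕ, (j + 1 : K) * u (j + 1) = (w + j) * u j) (k : ℕ) :
    (k + 1 : K) * ∑ j ∈ range (k + 1), u j / ((k + 1 : K) - j) =
      (w + k) * ∑ j ∈ range k, u j / ((k : K) - j) + u k := by
  have hterm : ∀ j ∈ range k, (k + 1 : K) * (u (j + 1) / ((k + 1 : K) - (j + 1 : ℕ))) =
      (w + k) * (u j / ((k : K) - j)) + (u (j + 1) - u j) := by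
    intro j hj
    have hkj : (k : K) - j ≠ 0 := sub_ne_zero.2 (by exact_mod_cast (mem_range.1 hj).ne')
    rw [Nat.cast_succ, add_sub_add_right_eq_sub]
    field_simp
    linear_combination hu j
  have hk : (k + 1 : K) ≠ 0 := by exact_mod_cast k.succ_ne_zero
  rw [sum_range_succ', mul_add, mul_sum, sum_congr rfl hterm, sum_add_distrib, ← mul_sum,
    sum_range_sub u, Nat.cast_zero, sub_zero, mul_div_cancel₀ _ hk]
  ring

theorem HasDerivAt.ofReal_cpow_mul_sub_log {x : ℝ} (hx : 0 < x) (s a b : ℂ) :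
    HasDerivAt (fun y : ℝ => (y : ℂ) ^ s * (a - b * Real.log y))
      ((x : ℂ) ^ (s - 1) * (s * a - b - s * b * Real.log x)) x := by
  have hpow : HasDerivAt (fun y : ℝ => (y : ℂ) ^ s) (s * (x : ℂ) ^ (s - 1)) x :=
    (Complex.hasStrictDerivAt_cpow_const (Complex.ofReal_mem_slitPlane.2 hx)).hasDerivAt.comp_ofReal
  have hlog : HasDerivAt (fun y : ℝ => ((Real.log y : ℝ) : ℂ)) ((x : ℂ)⁻¹) x := by
    simpa using (Real.hasDerivAt_log hx.ne').ofReal_comp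
  have hx' : (x : ℂ) ≠ 0 := by exact_mod_cast hx.ne'
  refine (hpow.mul ((hlog.const_mul b).const_sub a)).congr_deriv ?_
  rw [Complex.cpow_sub _ _ hx', Complex.cpow_one]
  field_simp
  ring

def risingFactorial (z : ℂ) (k : ℕ) : ℂ := ∏ i ∈ range k, (z + i)

noncomputable def cpowLogCoeff (z : ℂ) (k : ℕ) : ℂ :=
  k ! * ∑ j ∈ range k, risingFactorial z j / (j ! * ((k : ℂ) - j))

theorem risingFactorial_succ (z : ℂ) (k : ℕ) :
    risingFactorial z (k + 1) = risingFactorial z k * (z + k) :=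
  prod_range_succ _ _

theorem cpowLogCoeff_zero (z : ℂ) : cpowLogCoeff z 0 = 0 := by
  simp [cpowLogCoeff]

theorem cpowLogCoeff_succ (z : ℂ) (k : ℕ) :
    cpowLogCoeff z (k + 1) = (z + k) * cpowLogCoeff z k + risingFactorial z k := by
  set u : ℕ → ℂ := fun j => risingFactorial z j / (j ! : ℂ)
  have hu : ∀ j : ℕ, (j + 1 : ℂ) * u (j + 1) = (z + j) * u j := by
    intro j
    simp only [u, risingFactorial_succ, Nat.factorial_succ, Nat.cast_mul, Nat.cast_succ]
    field_simp
  have hsum : ∀ m : ℕ, ∑ j ∈ range m, risingFactorial z j / (j ! * ((m : ℂ) - j)) =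
      ∑ j ∈ range m, u j / ((m : ℂ) - j) :=
    fun m => sum_congr rfl fun j _ => div_mul_eq_div_div _ _ _
  have hk : (k ! : ℂ) ≠ 0 := by exact_mod_cast k.factorial_ne_zero
  rw [cpowLogCoeff, cpowLogCoeff, hsum, hsum, Nat.factorial_succ, Nat.cast_mul, Nat.cast_succ,
    mul_comm _ (k ! : ℂ), mul_assoc, sum_range_succ_div_sub u z hu, mul_add,
    mul_div_cancel₀ _ hk]
  ring

theorem iteratedDeriv_neg_cpow_mul_log {x : ℝ} (hx : 0 < x) (z : ℂ) (k : ℕ) :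
    iteratedDeriv k (fun y : ℝ => -(y : ℂ) ^ (-z) * (Real.log y : ℂ)) x =
      (-1) ^ k * (x : ℂ) ^ (-z - k) * (cpowLogCoeff z k - risingFactorial z k * Real.log x) := by
  induction k generalizing x with
  | zero => simp [cpowLogCoeff_zero, risingFactorial]
  | succ k ih =>
    have hnear : iteratedDeriv k (fun y : ℝ => -(y : ℂ) ^ (-z) * (Real.log y : ℂ)) =ᶠ[nhds x]
        fun y => (-1) ^ k * ((y : ℂ) ^ (-z - k) *
          (cpowLogCoeff z k - risingFactorial z k * Real.log y)) :=
      Filter.eventually_of_mem (Ioi_mem_nhds hx) fun y hy => (ih hy).trans (mul_assoc _ _ _)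
    rw [iteratedDeriv_succ, hnear.deriv_eq,
      ((HasDerivAt.ofReal_cpow_mul_sub_log hx _ _ _).const_mul _).deriv,
      show -z - (k : ℂ) - 1 = -z - (k + 1 : ℕ) by push_cast; ring,
      cpowLogCoeff_succ, risingFactorial_succ]
    ring

theorem iteratedDeriv_cpow_log_shift_general (z : ℂ) (q : ℝ) (hq : 0 < q) (k : ℕ) :
    iteratedDeriv k
        (fun t : ℝ => -(((q + t : ℝ)) : ℂ) ^ (-z) * ((Real.log (q + t) : ℝ) : ℂ)) 0 =
      (-1 : ℂ) ^ k * (k.factorial : ℂ) *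
          (∑ j ∈ Finset.range k,
            (∏ i ∈ Finset.range j, (z + (i : ℂ))) / ((j.factorial : ℂ) * ((k : ℂ) - (j : ℂ)))) *
          (q : ℂ) ^ (-z - (k : ℂ)) +
        (-1 : ℂ) ^ (k + 1) * (∏ i ∈ Finset.range k, (z + (i : ℂ))) *
          (q : ℂ) ^ (-z - (k : ℂ)) * ((Real.log q : ℝ) : ℂ) := by
  rw [iteratedDeriv_comp_const_add k (fun y : ℝ => -(y : ℂ) ^ (-z) * (Real.log y : ℂ)) q]
  beta_reduce
  rw [add_zero, iteratedDeriv_neg_cpow_mul_log hq, cpowLogCoeff]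
  simp only [risingFactorial]
  ring

theorem iteratedDeriv_cpow_log_shift (z : ℂ) (q : ℝ) (hq : 0 < q) (k : ℕ) (hk : 2 ≤ k) :
    iteratedDeriv k
        (fun t : ℝ => -(((q + t : ℝ)) : ℂ) ^ (-z) * ((Real.log (q + t) : ℝ) : ℂ)) 0 =
      (-1 : ℂ) ^ k * (k.factorial : ℂ) *
          (∑ j ∈ Finset.range k,
            (∏ i ∈ Finset.range j, (z + (i : ℂ))) / ((j.factorial : ℂ) * ((k : ℂ) - (j : ℂ)))) *
          (q : ℂ) ^ (-z - (k : ℂ)) +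
        (-1 : ℂ) ^ (k + 1) * (∏ i ∈ Finset.range k, (z + (i : ℂ))) *
          (q : ℂ) ^ (-z - (k : ℂ)) * ((Real.log q : ℝ) : ℂ) :=
  iteratedDeriv_cpow_log_shift_general z q hq k
end
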